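/- Let μ, ν be discrete probability measures on a finite set X and c : X × X → ℝ≥0 a cost. For any p ≥ 1, W^{(∞)}_c(μ,ν) ≤ W_{c^p}(μ,ν)^{1/p} / (α_p)^{1/p}, where α_p is the minimal atom mass of the diffusive parts of any diffusive model of a trim optimal plan for the cost c^p. -/

import Mathlib

/-! Every nonzero mass `π x y = μᵈ x [h₁ x = y] + νᵈ y [h₂ y = x]` of the diffusive model is at
least one atom of `μᵈ` or `νᵈ`, hence at least `α_p`. So on the support of the optimal plan `π`,
`c(x,y)^p α_p ≤ c(x,y)^p π(x,y) ≤ W_{c^p}(μ,ν)`, and `π` itself witnesses the bound on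
`W^{(∞)}_c(μ,ν)`. -/

open Finset

/-- A transportation plan between discrete measures `μ` and `ν`. -/
def IsPlan {X : Type*} [Fintype X] (μ ν : X → ℝ) (π : X → X → ℝ) : Prop :=
  (∀ x y, 0 ≤ π x y) ∧ (∀ x, ∑ y, π x y = μ x) ∧ (∀ y, ∑ x, π x y = ν y)

/-- Total transport cost of a plan. -/
noncomputable def tcost {X : Type*} [Fintype X] (c π : X → X → ℝ) : ℝ :=
  ∑ x, ∑ y, c x y * π x y

open Classical in
/-- Support of a plan, as a finite set of pairs. -/
noncomputable def spt {X : Type*} [Fintype X] (π : X → X → ℝ) : Finset (X × X) :=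
  Finset.univ.filter (fun p => π p.1 p.2 ≠ 0)

open Classical in
/-- Support of a discrete measure. -/
noncomputable def msupp {X : Type*} [Fintype X] (μ : X → ℝ) : Finset X :=
  Finset.univ.filter (fun x => μ x ≠ 0)

/-- An optimal transportation plan. -/
def IsOptimal {X : Type*} [Fintype X] (c : X → X → ℝ) (μ ν : X → ℝ) (π : X → X → ℝ) : Prop :=
  IsPlan μ ν π ∧ ∀ π' : X → X → ℝ, IsPlan μ ν π' → tcost c π ≤ tcost c π'

/-- A trim plan: optimal with support of minimal cardinality among optimal plans. -/
def IsTrim {X : Type*} [Fintype X] (c : X → X → ℝ) (μ ν : X → ℝ) (π : X → X → ℝ) : Prop :=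
  IsOptimal c μ ν π ∧
    ∀ π' : X → X → ℝ, IsOptimal c μ ν π' → (spt π).card ≤ (spt π').card

/-- `L^∞` norm of the cost with respect to a plan: max of `c` on the support. -/
noncomputable def linf {X : Type*} [Fintype X] (c π : X → X → ℝ) : ℝ :=
  (((spt π).image (fun p => c p.1 p.2)).max).unbotD 0

/-- Optimal transport cost `W_c(μ,ν)`. -/
noncomputable def Wc {X : Type*} [Fintype X] (c : X → X → ℝ) (μ ν : X → ℝ) : ℝ :=
  sInf {r | ∃ π, IsPlan μ ν π ∧ tcost c π = r}

/-- Infinity-Wasserstein cost `W_c^{(∞)}(μ,ν)`. -/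
noncomputable def Winf {X : Type*} [Fintype X] (c : X → X → ℝ) (μ ν : X → ℝ) : ℝ :=
  sInf {r | ∃ π, IsPlan μ ν π ∧ linf c π = r}

/-- The deterministic plan `(Id, h)_# σ`. -/
def pushF {X : Type*} [DecidableEq X] (h : X → X) (σ : X → ℝ) : X → X → ℝ :=
  fun x y => if h x = y then σ x else 0

/-- The deterministic plan `(h, Id)_# σ`. -/
def pushB {X : Type*} [DecidableEq X] (h : X → X) (σ : X → ℝ) : X → X → ℝ :=
  fun x y => if h y = x then σ y else 0

section
variable {X : Type*} [Fintype X]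

lemma mem_msupp {μ : X → ℝ} {x : X} : x ∈ msupp μ ↔ μ x ≠ 0 := by
  simp [msupp]

lemma pos_of_mem_image_msupp {σ : X → ℝ} (hσ : ∀ x, 0 ≤ σ x) {b : ℝ}
    (hb : b ∈ (msupp σ).image σ) : 0 < b := by
  obtain ⟨x, hx, rfl⟩ := mem_image.1 hb
  exact (hσ x).lt_of_ne' (mem_msupp.1 hx)

lemma mem_spt {π : X → X → ℝ} {x y : X} : (x, y) ∈ spt π ↔ π x y ≠ 0 := by
  simp [spt]

lemma IsOptimal.Wc_eq {c π : X → X → ℝ} {μ ν : X → ℝ} (h : IsOptimal c μ ν π) :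
    Wc c μ ν = tcost c π :=
  IsLeast.csInf_eq ⟨⟨π, h.1, rfl⟩, by rintro _ ⟨π', hπ', rfl⟩; exact h.2 π' hπ'⟩

lemma tcost_nonneg {c π : X → X → ℝ} (hc : ∀ x y, 0 ≤ c x y) (hπ : ∀ x y, 0 ≤ π x y) :
    0 ≤ tcost c π :=
  sum_nonneg fun x _ => sum_nonneg fun y _ => mul_nonneg (hc x y) (hπ x y)

lemma mul_le_tcost {c π : X → X → ℝ} (hc : ∀ x y, 0 ≤ c x y) (hπ : ∀ x y, 0 ≤ π x y)
    (x y : X) : c x y * π x y ≤ tcost c π :=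
  calc c x y * π x y ≤ ∑ y', c x y' * π x y' :=
        single_le_sum (fun y' _ => mul_nonneg (hc x y') (hπ x y')) (mem_univ y)
    _ ≤ tcost c π :=
        single_le_sum (f := fun x' => ∑ y', c x' y' * π x' y')
          (fun x' _ => sum_nonneg fun y' _ => mul_nonneg (hc x' y') (hπ x' y')) (mem_univ x)

lemma linf_nonneg {c : X → X → ℝ} (hc : ∀ x y, 0 ≤ c x y) (π : X → X → ℝ) : 0 ≤ linf c π := by
  unfold linf
  cases hmax : ((spt π).image fun q => c q.1 q.2).max with
  | bot => rfl
  | coe b =>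
    obtain ⟨q, -, rfl⟩ := mem_image.1 (mem_of_max hmax)
    exact hc q.1 q.2

lemma linf_le {c π : X → X → ℝ} {B : ℝ} (hB : 0 ≤ B) (h : ∀ x y, π x y ≠ 0 → c x y ≤ B) :
    linf c π ≤ B := by
  refine (WithBot.unbotD_le_iff fun _ => hB).2 (Finset.max_le fun b hb => ?_)
  obtain ⟨⟨x, y⟩, hxy, rfl⟩ := mem_image.1 hb
  exact WithBot.coe_le_coe.2 (h x y (mem_spt.1 hxy))

lemma Winf_le_linf {c π : X → X → ℝ} {μ ν : X → ℝ} (hc : ∀ x y, 0 ≤ c x y)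
    (hπ : IsPlan μ ν π) : Winf c μ ν ≤ linf c π :=
  csInf_le ⟨0, by rintro _ ⟨π', -, rfl⟩; exact linf_nonneg hc π'⟩ ⟨π, hπ, rfl⟩

end

lemma le_rpow_div_of_rpow_mul_le {a α T p : ℝ} (ha : 0 ≤ a) (hα : 0 < α) (hp : 0 < p)
    (h : a ^ p * α ≤ T) : a ≤ T ^ (1 / p) / α ^ (1 / p) := by
  have hT : 0 ≤ T := le_trans (by positivity) h
  calc a = (a ^ p) ^ (1 / p) := by rw [one_div, Real.rpow_rpow_inv ha hp.ne']
    _ ≤ (T / α) ^ (1 / p) :=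
        Real.rpow_le_rpow (by positivity) ((le_div_iff₀ hα).2 h) (by positivity)
    _ = T ^ (1 / p) / α ^ (1 / p) := Real.div_rpow hT hα.le _

lemma Finset.untopD_min_nonneg {s : Finset ℝ} (hs : ∀ b ∈ s, 0 ≤ b) : 0 ≤ s.min.untopD 0 :=
  (WithTop.le_untopD_iff fun _ => le_rfl).2
    (Finset.le_min fun b hb => WithTop.coe_le_coe.2 (hs b hb))

lemma Finset.untopD_min_pos {s : Finset ℝ} (hne : s.Nonempty) (hs : ∀ b ∈ s, 0 < b) :
    0 < s.min.untopD 0 := by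
  rw [← coe_min' hne, WithTop.untopD_coe]
  exact (lt_min'_iff s hne).2 hs

section
variable {X : Type*} [DecidableEq X]

lemma pushB_nonneg {σ : X → ℝ} (hσ : ∀ x, 0 ≤ σ x) (h : X → X) (x y : X) :
    0 ≤ pushB h σ x y := by
  unfold pushB; split_ifs <;> simp [hσ]

variable [Fintype X] {μd νd : X → ℝ}

lemma exists_atom_le_pushF_add_pushB (hνd : ∀ y, 0 ≤ νd y) {h₁ h₂ : X → X} {x y : X}
    (hne : pushF h₁ μd x y + pushB h₂ νd x y ≠ 0) :
    ∃ b ∈ (msupp μd).image μd ∪ (msupp νd).image νd,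
      b ≤ pushF h₁ μd x y + pushB h₂ νd x y := by
  by_cases hF : pushF h₁ μd x y = 0
  · rw [hF, zero_add] at hne ⊢
    unfold pushB at hne ⊢
    split_ifs at hne ⊢
    · exact ⟨νd y, mem_union_right _ (mem_image_of_mem _ (mem_msupp.2 hne)), le_rfl⟩
    · exact absurd rfl hne
  · refine ⟨pushF h₁ μd x y, ?_, le_add_of_nonneg_right (pushB_nonneg hνd h₂ x y)⟩
    unfold pushF at hF ⊢
    split_ifs at hF ⊢
    · exact mem_union_left _ (mem_image_of_mem _ (mem_msupp.2 hF))
    · exact absurd rfl hF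

end

theorem Winf_le_Wcp_div_alpha_general {X : Type*} [Fintype X] [DecidableEq X]
    (μ ν : X → ℝ) (c : X → X → ℝ) (p : ℝ) (π : X → X → ℝ)
    (hc : ∀ x y, 0 ≤ c x y) (hp : 1 ≤ p)
    (htrim : IsTrim (fun x y => c x y ^ p) μ ν π)
    (μd νd : X → ℝ) (h₁ h₂ : X → X)
    (hμd0 : ∀ x, 0 ≤ μd x)
    (hνd0 : ∀ y, 0 ≤ νd y)
    (hdec : ∀ x y, π x y = pushF h₁ μd x y + pushB h₂ νd x y) :
    Winf c μ ν ≤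
      (Wc (fun x y => c x y ^ p) μ ν) ^ (1 / p) /
        (((((msupp μd).image μd) ∪ ((msupp νd).image νd)).min).untopD 0) ^ (1 / p) := by
  obtain ⟨hopt, -⟩ := htrim
  set S := ((msupp μd).image μd) ∪ ((msupp νd).image νd)
  have hS : ∀ b ∈ S, 0 < b := by
    intro b hb
    rcases mem_union.1 hb with hb | hb
    exacts [pos_of_mem_image_msupp hμd0 hb, pos_of_mem_image_msupp hνd0 hb]
  have hcp : ∀ x y, 0 ≤ c x y ^ p := fun x y => Real.rpow_nonneg (hc x y) p
  have hbound : ∀ x y, π x y ≠ 0 →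
      c x y ≤ tcost (fun x y => c x y ^ p) π ^ (1 / p) / S.min.untopD 0 ^ (1 / p) := by
    intro x y hxy
    obtain ⟨b, hbS, hb⟩ := exists_atom_le_pushF_add_pushB hνd0 (hdec x y ▸ hxy)
    refine le_rpow_div_of_rpow_mul_le (hc x y) (untopD_min_pos ⟨b, hbS⟩ hS) (by linarith) ?_
    calc c x y ^ p * S.min.untopD 0 ≤ c x y ^ p * π x y :=
          mul_le_mul_of_nonneg_left ((WithTop.untopD_le (min_le hbS)).trans (hdec x y ▸ hb))
            (hcp x y)
      _ ≤ _ := mul_le_tcost hcp hopt.1.1 x y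
  have hB : 0 ≤ tcost (fun x y => c x y ^ p) π ^ (1 / p) / S.min.untopD 0 ^ (1 / p) :=
    div_nonneg (Real.rpow_nonneg (tcost_nonneg hcp hopt.1.1) _)
      (Real.rpow_nonneg (untopD_min_nonneg fun b hb => (hS b hb).le) _)
  rw [hopt.Wc_eq]
  exact (Winf_le_linf hc hopt.1).trans (linf_le hB hbound)

/-- `W^{(∞)}_c(μ,ν) ≤ W_{c^p}(μ,ν)^{1/p} / α_p^{1/p}` where `α_p` is the
minimal diffusive atom mass of a diffusive model of a trim plan for the cost `c^p`. -/
theorem Winf_le_Wcp_div_alpha {X : Type*} [Fintype X] [DecidableEq X]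
    (μ ν : X → ℝ) (c : X → X → ℝ) (p : ℝ) (π : X → X → ℝ)
    (hμ0 : ∀ x, 0 ≤ μ x) (hν0 : ∀ y, 0 ≤ ν y)
    (hμ1 : ∑ x, μ x = 1) (hν1 : ∑ y, ν y = 1)
    (hc : ∀ x y, 0 ≤ c x y) (hp : 1 ≤ p)
    (htrim : IsTrim (fun x y => c x y ^ p) μ ν π)
    (μd μc νd νc : X → ℝ) (h₁ h₂ : X → X)
    (hμd0 : ∀ x, 0 ≤ μd x) (hμc0 : ∀ x, 0 ≤ μc x)
    (hνd0 : ∀ y, 0 ≤ νd y) (hνc0 : ∀ y, 0 ≤ νc y)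
    (hμdec : ∀ x, μ x = μd x + μc x) (hνdec : ∀ y, ν y = νd y + νc y)
    (hdec : ∀ x y, π x y = pushF h₁ μd x y + pushB h₂ νd x y) :
    Winf c μ ν ≤
      (Wc (fun x y => c x y ^ p) μ ν) ^ (1 / p) /
        (((((msupp μd).image μd) ∪ ((msupp νd).image νd)).min).untopD 0) ^ (1 / p) :=
  Winf_le_Wcp_div_alpha_general μ ν c p π hc hp htrim μd νd h₁ h₂ hμd0 hνd0 hdec
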